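/- arXiv:2601.19830 — 2 statements merged into one kernel-verified Lean document; each statement's English description precedes it below -/
import Mathlib

section
/- Let M = ([n]∪[n]*, B) be an orthogonal matroid, T a transversal, and i ∈ T such that T △ {i,i*} ∈ B. Then there is a unique circuit C of M with C ⊆ T, and it equals C = { j ∈ T : T △ {j,j*} ∈ B }. -/
/-- The ground set `[n] ∪ [n]*`: the element `i ∈ [n]` is `(i, false)` and its
starred copy `i*` is `(i, true)`. -/
abbrev GroundSet (n : ℕ) := Fin n × Bool

/-- The involution `x ↦ x*`. -/
def st {n : ℕ} (x : GroundSet n) : GroundSet n := (x.1, !x.2)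

/-- The skew pair `{x, x*}`. -/
def skw {n : ℕ} (x : GroundSet n) : Finset (GroundSet n) := {x, st x}

/-- The skew pair `{i, i*}` of an index `i ∈ [n]`. -/
def pr {n : ℕ} (i : Fin n) : Finset (GroundSet n) := {(i, false), (i, true)}

/-- A transversal: a subset of `[n] ∪ [n]*` containing exactly one of `i`, `i*`
for each `i ∈ [n]`. -/
def IsTransversal {n : ℕ} (T : Finset (GroundSet n)) : Prop :=
  ∀ i : Fin n, ((i, false) ∈ T ↔ (i, true) ∉ T)

/-- An orthogonal matroid on `[n] ∪ [n]*`: a nonempty collection of transversals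
satisfying the strong exchange axiom. -/
def IsOrthogonalMatroid {n : ℕ} (𝓑 : Finset (Finset (GroundSet n))) : Prop :=
  𝓑.Nonempty ∧ (∀ B ∈ 𝓑, IsTransversal B) ∧
  ∀ B₁ ∈ 𝓑, ∀ B₂ ∈ 𝓑, ∀ x ∈ symmDiff B₁ B₂,
    ∃ y ∈ (symmDiff B₁ B₂) \ skw x,
      symmDiff B₁ (skw x ∪ skw y) ∈ 𝓑 ∧ symmDiff B₂ (skw x ∪ skw y) ∈ 𝓑

/-- A subtransversal: a subset of a transversal, i.e. a set containing no full
skew pair. -/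
def IsSubtransversal {n : ℕ} (C : Finset (GroundSet n)) : Prop :=
  ∀ i : Fin n, ¬((i, false) ∈ C ∧ (i, true) ∈ C)

/-- A circuit of the collection `𝓑`: a minimal subtransversal not contained in
any member of `𝓑`. -/
def IsCircuit {n : ℕ} (𝓑 : Finset (Finset (GroundSet n)))
    (C : Finset (GroundSet n)) : Prop :=
  IsSubtransversal C ∧ (∀ B ∈ 𝓑, ¬ C ⊆ B) ∧
  (∀ C' ⊂ C, ∃ B ∈ 𝓑, C' ⊆ B)

lemma st_st {n : ℕ} (x : GroundSet n) : st (st x) = x := by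
  simp [st]

lemma skw_st {n : ℕ} (x : GroundSet n) : skw (st x) = skw x := by
  simp [skw, st_st, Finset.pair_comm]

lemma transversal_not_both {n : ℕ} {T : Finset (GroundSet n)}
    (hT : IsTransversal T) {e : GroundSet n} (he : e ∈ T) : st e ∉ T := by
  obtain ⟨a, b⟩ := e
  have := hT a
  cases b <;> simp [st] at * <;> tauto

lemma transversal_other {n : ℕ} {T : Finset (GroundSet n)}
    (hT : IsTransversal T) {e : GroundSet n} (he : e ∉ T) : st e ∈ T := by
  obtain ⟨a, b⟩ := e
  have := hT a
  cases b <;> simp [st] at * <;> tauto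

/-- Fundamental circuits of orthogonal matroids: if `T` is a transversal and
`x ∈ T` is such that `T △ {x,x*}` is a basis, then there is a unique circuit
`C ⊆ T`, and it equals `{ y ∈ T : T △ {y,y*} is a basis }`. -/
theorem orthogonalMatroid_fundamental_circuit {n : ℕ}
    (𝓑 : Finset (Finset (GroundSet n))) (h : IsOrthogonalMatroid 𝓑)
    (T : Finset (GroundSet n)) (hT : IsTransversal T)
    (x : GroundSet n) (hx : x ∈ T) (hxB : symmDiff T (skw x) ∈ 𝓑) :
    IsCircuit 𝓑 (T.filter (fun y => symmDiff T (skw y) ∈ 𝓑))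
      ∧ (T.filter (fun y => symmDiff T (skw y) ∈ 𝓑)) ⊆ T
      ∧ ∀ C : Finset (GroundSet n), IsCircuit 𝓑 C → C ⊆ T →
          C = T.filter (fun y => symmDiff T (skw y) ∈ 𝓑) := by
  obtain ⟨hne, htrans, hexch⟩ := h
  set C := T.filter (fun y => symmDiff T (skw y) ∈ 𝓑) with hCdef
  have hCsub : C ⊆ T := Finset.filter_subset _ _
  have hxC : x ∈ C := Finset.mem_filter.mpr ⟨hx, hxB⟩
  -- any element of T other than e survives into T △ skw e
  have hmem : ∀ e ∈ T, ∀ c ∈ T, c ≠ e → c ∈ symmDiff T (skw e) := by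
    intro e he c hc hne
    have hcs : c ∉ skw e := by
      simp only [skw, Finset.mem_insert, Finset.mem_singleton]
      rintro (rfl | rfl)
      · exact hne rfl
      · exact transversal_not_both hT he hc
    exact Finset.mem_symmDiff.mpr (Or.inl ⟨hc, hcs⟩)
  -- Claim A : no basis contains C
  have claimA : ∀ B ∈ 𝓑, ¬ C ⊆ B := by
    intro B hB hsub
    have hxB2 : x ∈ B := hsub hxC
    have hxns : x ∈ skw x := by simp [skw]
    have hx1 : x ∈ symmDiff (symmDiff T (skw x)) B := by
      rw [Finset.mem_symmDiff]
      right
      refine ⟨hxB2, ?_⟩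
      rw [Finset.mem_symmDiff]
      push_neg
      exact ⟨fun _ => hxns, fun _ => hx⟩
    obtain ⟨y, hy, hB1, _⟩ := hexch _ hxB _ hB x hx1
    obtain ⟨hyd, hyns⟩ := Finset.mem_sdiff.mp hy
    have hynx : y ≠ x ∧ y ≠ st x := by
      constructor <;> rintro rfl <;> simp [skw] at hyns
    have hdisj : Disjoint (skw x) (skw y) := by
      rw [Finset.disjoint_left]
      intro a ha hb
      simp only [skw, Finset.mem_insert, Finset.mem_singleton] at ha hb
      rcases ha with rfl | rfl <;> rcases hb with h' | h'
      · exact hynx.1 h'.symm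
      · have h2 := congrArg st h'
        rw [st_st] at h2
        exact hynx.2 h2.symm
      · exact hynx.2 h'.symm
      · have h2 := congrArg st h'
        rw [st_st, st_st] at h2
        exact hynx.1 h2.symm
    have hTy : symmDiff T (skw y) ∈ 𝓑 := by
      have heq : symmDiff (symmDiff T (skw x)) (skw x ∪ skw y) = symmDiff T (skw y) := by
        rw [← Finset.sup_eq_union, ← hdisj.symmDiff_eq_sup, symmDiff_assoc,
          symmDiff_symmDiff_cancel_left]
      rwa [heq] at hB1
    have hyTB : y ∈ symmDiff T B := by
      rcases Finset.mem_symmDiff.mp hyd with ⟨h1, h2⟩ | ⟨h1, h2⟩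
      · rcases Finset.mem_symmDiff.mp h1 with ⟨h3, _⟩ | ⟨h3, _⟩
        · exact Finset.mem_symmDiff.mpr (Or.inl ⟨h3, h2⟩)
        · exact absurd h3 hyns
      · have h3 : y ∉ T := by
          intro hyT
          exact h2 (Finset.mem_symmDiff.mpr (Or.inl ⟨hyT, hyns⟩))
        exact Finset.mem_symmDiff.mpr (Or.inr ⟨h1, h3⟩)
    rcases Finset.mem_symmDiff.mp hyTB with ⟨hyT, hyB⟩ | ⟨hyB, hyT⟩
    · exact hyB (hsub (Finset.mem_filter.mpr ⟨hyT, hTy⟩))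
    · have hsyT : st y ∈ T := transversal_other hT hyT
      have hsyC : st y ∈ C := by
        refine Finset.mem_filter.mpr ⟨hsyT, ?_⟩
        rwa [skw_st]
      have hsyB : st y ∈ B := hsub hsyC
      exact transversal_not_both (htrans B hB) hyB hsyB
  -- Claim B : every proper subset of C is in a basis
  have claimB : ∀ C' ⊂ C, ∃ B ∈ 𝓑, C' ⊆ B := by
    intro C' hC'
    obtain ⟨e, heC, heC'⟩ := Finset.exists_of_ssubset hC'
    have heT : e ∈ T := hCsub heC
    have heB : symmDiff T (skw e) ∈ 𝓑 := (Finset.mem_filter.mp heC).2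
    refine ⟨_, heB, fun c hc => hmem e heT c (hCsub (hC'.subset hc)) ?_⟩
    rintro rfl
    exact heC' hc
  refine ⟨⟨?_, claimA, claimB⟩, hCsub, ?_⟩
  · intro i ⟨h1, h2⟩
    exact (hT i).mp (hCsub h1) (hCsub h2)
  · intro C' hC' hC'T
    have hsub1 : C ⊆ C' := by
      intro e heC
      by_contra heC'
      have heT : e ∈ T := hCsub heC
      have hss : C' ⊆ symmDiff T (skw e) := by
        intro c hc
        refine hmem e heT c (hC'T hc) ?_
        rintro rfl
        exact heC' hc
      exact hC'.2.1 _ (Finset.mem_filter.mp heC).2 hss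
    by_contra hne
    have hss : C ⊂ C' := hsub1.ssubset_of_ne (fun h' => hne h'.symm)
    obtain ⟨B, hB, hCB⟩ := hC'.2.2 C hss
    exact claimA B hB hCB
end

section
/- Let F be a tract, and let φ : T_n ∪ A_n → F be a restricted Grassmann–Plücker function of type D with parameter σ as in (rGP3). Let S be a hyper-transversal and S' = S \ {i,i*} for the skew pair {i,i*} ⊆ S. Define X_S(k) = (-1)^{|S<k|} φ(S\{k}) for k ∈ S (and 0 otherwise), and Y_{S'}(k) = (-1)^{|S'<k*|} φ(S'∪{k*}) for k ∉ (S')* (and 0 otherwise), using the order 1 < 1* < 2 < 2* < ... < n < n*. Then Y_{S'} = X_S or Y_{S'} = -X_S. -/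
/-- A tract: a commutative multiplicative monoid `F = F^× ⊔ {0}` in which every
nonzero element is invertible (a `CommGroupWithZero`), together with a null set
`N` of formal sums of elements of `F` (encoded as multisets, modulo the rule
that adding or removing a summand `0` does not change nullity), satisfying:
(T2) the only null singleton sum is `0`; (T3) there is a unique element `-1 ∈ F^×`
with `1 + (-1)` null; (T4) the null set is closed under multiplication by
elements of `F^×`. -/
structure Tract (F : Type*) [CommGroupWithZero F] where
  /-- The null set of formal sums. -/
  N : Set (Multiset F)
  /-- `0 + Σ aᵢ` is null iff `Σ aᵢ` is null. -/
  zero_cons_mem_iff : ∀ m : Multiset F, (0 ::ₘ m) ∈ N ↔ m ∈ N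
  /-- (T2) `F ∩ N = {0}`: a one-term formal sum is null iff its term is `0`. -/
  singleton_mem_iff : ∀ a : F, ({a} : Multiset F) ∈ N ↔ a = 0
  /-- (T3) There is a unique `ε ∈ F^×` with `1 + ε` null. -/
  existsUnique_neg_one : ∃! ε : F, ε ≠ 0 ∧ ({1, ε} : Multiset F) ∈ N
  /-- (T4) `c · α ∈ N` for `α ∈ N` and `c ∈ F^×`. -/
  smul_mem : ∀ c : F, c ≠ 0 → ∀ m ∈ N, Multiset.map (fun x => c * x) m ∈ N

/-- An almost-transversal: an `n`-element subset of `[n] ∪ [n]*` containing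
exactly one full skew pair `{i, i*}`. -/
def IsAlmostTransversal {n : ℕ} (A : Finset (GroundSet n)) : Prop :=
  A.card = n ∧ ∃! i : Fin n, (i, false) ∈ A ∧ (i, true) ∈ A

/-- A hyper-transversal: a transversal with one extra element added. -/
def IsHyperTransversal {n : ℕ} (S : Finset (GroundSet n)) : Prop :=
  ∃ (T : Finset (GroundSet n)) (x : GroundSet n),
    IsTransversal T ∧ x ∉ T ∧ S = insert x T

/-- A hypo-transversal: a transversal with one element removed. -/
def IsHypoTransversal {n : ℕ} (S : Finset (GroundSet n)) : Prop :=
  ∃ (T : Finset (GroundSet n)) (x : GroundSet n),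
    IsTransversal T ∧ x ∈ T ∧ S = T.erase x


/-- The position of an element in the order `1 < 1* < 2 < 2* < ⋯ < n < n*`. -/
def idx {n : ℕ} (p : GroundSet n) : ℕ := 2 * p.1.val + (if p.2 then 1 else 0)

/-- The vector `X_S` associated with a hyper-transversal `S`:
`X_S(k) = (-1)^{|S<k|} φ(S \ {k})` for `k ∈ S` and `0` otherwise. -/
def Xvec {n : ℕ} {F : Type*} [CommGroupWithZero F] (φ : Finset (GroundSet n) → F)
    (ε : F) (S : Finset (GroundSet n)) : GroundSet n → F := fun k =>
  if k ∈ S then ε ^ ((S.filter (fun a => idx a < idx k)).card) * φ (S.erase k) else 0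

/-- The vector `Y_{S'}` associated with a hypo-transversal `S'`:
`Y_{S'}(k) = (-1)^{|S'<k*|} φ(S' ∪ {k*})` for `k ∉ (S')*` and `0` otherwise. -/
def Yvec {n : ℕ} {F : Type*} [CommGroupWithZero F] (φ : Finset (GroundSet n) → F)
    (ε : F) (S' : Finset (GroundSet n)) : GroundSet n → F := fun k =>
  if st k ∈ S' then 0
  else ε ^ ((S'.filter (fun a => idx a < idx (st k))).card) * φ (insert (st k) S')

/-!
Write `S = S' ∪ {i, i*}`, so that `S'` misses `{i, i*}` and meets every other skew pair once,
and let `s` be the number of starred elements of `S'`. We show `Y_{S'}(k) = (-1)^{s+σ+1} X_S(k)`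
for every `k`. For `k ∈ {i, i*}` both sides are signed values of `φ` at the same transversal
`S' ∪ {k*} = S \ {k}`, which vanishes unless its parity is `σ` (rGP3), and that parity condition
is exactly what makes the signs agree. For `k ∈ S'` the almost-transversals `S' ∪ {k*}` and
`S \ {k}` are exchanged by (rGP4) applied to whichever of `S' ∪ {i}`, `S' ∪ {i*}` has parity `σ`.
For every other `k` both sides vanish. Finally `(-1)² = 1` in a tract, by uniqueness of `-1`.
-/

theorem Tract.mul_self_eq_one {F : Type*} [CommGroupWithZero F] (T : Tract F) {ε : F}
    (hε₀ : ε ≠ 0) (hε : ({1, ε} : Multiset F) ∈ T.N) : ε * ε = 1 := by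
  obtain ⟨e, -, huniq⟩ := T.existsUnique_neg_one
  have hinv : ({1, ε⁻¹} : Multiset F) ∈ T.N := by
    have h := T.smul_mem ε⁻¹ (inv_ne_zero hε₀) _ hε
    rwa [Multiset.insert_eq_cons, Multiset.map_cons, Multiset.map_singleton, mul_one,
      inv_mul_cancel₀ hε₀, ← Multiset.insert_eq_cons, Multiset.pair_comm] at h
  have h : ε = ε⁻¹ := (huniq ε ⟨hε₀, hε⟩).trans (huniq ε⁻¹ ⟨inv_ne_zero hε₀, hinv⟩).symm
  nth_rewrite 2 [h]
  exact mul_inv_cancel₀ hε₀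

section Signs

variable {M : Type*} [Monoid M] {ε : M}

theorem pow_eq_pow_of_mod_two_eq (hε : ε * ε = 1) {a b : ℕ} (hab : a % 2 = b % 2) :
    ε ^ a = ε ^ b := by
  have h2 : ε ^ 2 = 1 := by rw [sq, hε]
  rw [pow_eq_pow_mod a h2, pow_eq_pow_mod b h2, hab]

theorem pow_eq_one_or_eq_self (hε : ε * ε = 1) (m : ℕ) : ε ^ m = 1 ∨ ε ^ m = ε := by
  rcases Nat.mod_two_eq_zero_or_one m with h | h
  · exact Or.inl ((pow_eq_pow_of_mod_two_eq hε (b := 0) h).trans (pow_zero ε))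
  · exact Or.inr ((pow_eq_pow_of_mod_two_eq hε (b := 1) h).trans (pow_one ε))

end Signs

section GroundSet

variable {n : ℕ}

@[simp]
theorem fst_st (a : GroundSet n) : (st a).1 = a.1 := rfl

@[simp]
theorem snd_st (a : GroundSet n) : (st a).2 = !a.2 := rfl

theorem st_ne_self (a : GroundSet n) : st a ≠ a := by
  simp [st, Prod.ext_iff]

theorem eq_or_eq_st_of_fst_eq {a b : GroundSet n} (h : a.1 = b.1) : a = b ∨ a = st b := by
  obtain ⟨a1, a2⟩ := a
  obtain ⟨b1, b2⟩ := b
  cases a2 <;> cases b2 <;> simp_all [st]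

theorem mem_pr {i : Fin n} {a : GroundSet n} : a ∈ pr i ↔ a.1 = i := by
  obtain ⟨a1, a2⟩ := a
  cases a2 <;> simp [pr, Prod.ext_iff]

theorem pr_fst (a : GroundSet n) : pr a.1 = skw a := by
  ext b
  rw [mem_pr, skw, Finset.mem_insert, Finset.mem_singleton]
  constructor
  · exact eq_or_eq_st_of_fst_eq
  · rintro (rfl | rfl) <;> rfl

theorem isTransversal_iff {T : Finset (GroundSet n)} :
    IsTransversal T ↔ ∀ a : GroundSet n, a ∈ T ↔ st a ∉ T := by
  refine ⟨fun h ⟨i, b⟩ => ?_, fun h i => h (i, false)⟩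
  cases b
  · exact h i
  · simpa [st] using (not_congr (h i)).symm

end GroundSet

section Transversals

variable {n : ℕ}

structure IsTransversalOff (i : Fin n) (A : Finset (GroundSet n)) : Prop where
  fst_ne : ∀ a ∈ A, a.1 ≠ i
  mem_iff : ∀ a : GroundSet n, a.1 ≠ i → (a ∈ A ↔ st a ∉ A)

theorem IsTransversal.isTransversalOff_sdiff_pr {T : Finset (GroundSet n)}
    (hT : IsTransversal T) (i : Fin n) : IsTransversalOff i (T \ pr i) where
  fst_ne a ha := mem_pr.not.1 (Finset.mem_sdiff.1 ha).2
  mem_iff a ha := by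
    simpa [Finset.mem_sdiff, mem_pr, ha] using isTransversal_iff.1 hT a

theorem IsTransversalOff.isTransversal_insert {i : Fin n} {A : Finset (GroundSet n)}
    (hA : IsTransversalOff i A) (b : Bool) : IsTransversal (insert (i, b) A) := by
  rw [isTransversal_iff]
  intro a
  by_cases ha : a.1 = i
  · have haA : a ∉ A := fun h => hA.fst_ne a h ha
    have hstA : st a ∉ A := fun h => hA.fst_ne _ h ha
    obtain ⟨a1, a2⟩ := a
    subst ha
    cases a2 <;> cases b <;> simp_all [st]
  · have h1 : a ≠ (i, b) := fun h => ha (by rw [h])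
    have h2 : st a ≠ (i, b) := fun h => ha (by rw [← fst_st, h])
    simpa [h1, h2] using hA.mem_iff a ha

theorem IsHyperTransversal.exists_isTransversal_eq_union_pr {S : Finset (GroundSet n)}
    (hS : IsHyperTransversal S) {x : GroundSet n} (hx : skw x ⊆ S) :
    ∃ T, IsTransversal T ∧ S = T ∪ pr x.1 := by
  obtain ⟨T, y, hT, hyT, rfl⟩ := hS
  have hy : y.1 = x.1 := by
    by_contra hne
    have mem_T : ∀ a ∈ skw x, a ∈ T := fun a ha =>
      (Finset.mem_insert.1 (hx ha)).resolve_left fun h => hne (h ▸ mem_pr.1 ((pr_fst x).symm ▸ ha))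
    exact (isTransversal_iff.1 hT x).1 (mem_T x (by simp [skw])) (mem_T (st x) (by simp [skw]))
  have hstT : st y ∈ T := by
    simpa using (isTransversal_iff.1 hT y).not.1 hyT
  refine ⟨T, hT, ?_⟩
  rw [← hy, pr_fst, skw]
  ext a
  simp only [Finset.mem_insert, Finset.mem_union, Finset.mem_singleton]
  constructor
  · rintro (rfl | h) <;> simp [*]
  · rintro (h | rfl | rfl) <;> simp [*]

end Transversals

section Counting

variable {n : ℕ}

def numStars (A : Finset (GroundSet n)) : ℕ := (A.filter fun p => p.2 = true).card

/-- `|A < k|` in the order `1 < 1* < 2 < 2* < ⋯ < n < n*`. -/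
def numBelow (A : Finset (GroundSet n)) (k : GroundSet n) : ℕ :=
  (A.filter fun a => idx a < idx k).card

theorem numStars_insert {A : Finset (GroundSet n)} {p : GroundSet n} (hp : p ∉ A) :
    numStars (insert p A) = numStars A + if p.2 then 1 else 0 := by
  unfold numStars
  rw [Finset.filter_insert]
  split_ifs with h
  · rw [Finset.card_insert_of_notMem (by simp [hp])]
  · rfl

theorem numBelow_union {A B : Finset (GroundSet n)} (h : Disjoint A B) (k : GroundSet n) :
    numBelow (A ∪ B) k = numBelow A k + numBelow B k := by
  unfold numBelow
  rw [Finset.filter_union, Finset.card_union_of_disjoint (Finset.disjoint_filter_filter h)]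

theorem numBelow_pr_fst (k : GroundSet n) : numBelow (pr k.1) k = if k.2 then 1 else 0 := by
  obtain ⟨i, b⟩ := k
  cases b <;> simp [numBelow, pr, idx, Finset.filter_insert]

theorem even_numBelow_pr {i : Fin n} {k : GroundSet n} (h : i ≠ k.1) :
    Even (numBelow (pr i) k) := by
  have hv : i.val ≠ k.1.val := Fin.val_ne_of_ne h
  have hiff : idx ((i, false) : GroundSet n) < idx k ↔ idx ((i, true) : GroundSet n) < idx k := by
    simp only [idx]
    split_ifs <;> omega
  unfold numBelow
  rw [pr, Finset.filter_insert, Finset.filter_singleton]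
  by_cases h1 : idx ((i, true) : GroundSet n) < idx k
  · simp [h1, hiff.2 h1]
  · simp [h1, hiff.not.2 h1]

theorem numBelow_st_of_forall_fst_ne {A : Finset (GroundSet n)} {k : GroundSet n}
    (h : ∀ a ∈ A, a.1 ≠ k.1) : numBelow A (st k) = numBelow A k := by
  unfold numBelow
  congr 1
  refine Finset.filter_congr fun a ha => ?_
  have hv : a.1.val ≠ k.1.val := Fin.val_ne_of_ne (h a ha)
  simp only [idx, st]
  split_ifs <;> simp_all <;> omega

theorem numBelow_st_of_mem {A : Finset (GroundSet n)} {k : GroundSet n} (hk : k ∈ A)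
    (hst : st k ∉ A) : numBelow A (st k) = numBelow A k + if k.2 then 0 else 1 := by
  have hoff : ∀ a ∈ A.erase k, a.1 ≠ k.1 := fun a ha h =>
    (eq_or_eq_st_of_fst_eq h).elim (Finset.ne_of_mem_erase ha)
      fun h' => hst (h' ▸ Finset.mem_of_mem_erase ha)
  have hkk : ¬ idx k < idx k := lt_irrefl _
  have hkst : idx k < idx (st k) ↔ k.2 = false := by
    obtain ⟨i, b⟩ := k
    cases b <;> simp [idx, st]
  rw [← Finset.insert_erase hk]
  unfold numBelow
  rw [Finset.filter_insert, Finset.filter_insert, if_neg hkk]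
  have hrest := numBelow_st_of_forall_fst_ne hoff
  unfold numBelow at hrest
  cases hb : k.2
  · rw [if_pos (hkst.2 hb), Finset.card_insert_of_notMem (by simp), hrest]
    rfl
  · rw [if_neg (by simpa [hb] using hkst.not), hrest]
    rfl

end Counting

section GrassmannPluecker

variable {n : ℕ} {F : Type*}

def SatisfiesRGP3 [Zero F] (σ : ℕ) (φ : Finset (GroundSet n) → F) : Prop :=
  ∀ B : Finset (GroundSet n), IsTransversal B → numStars B % 2 ≠ σ % 2 → φ B = 0

def SatisfiesRGP4 [Monoid F] (ε : F) (σ : ℕ) (φ : Finset (GroundSet n) → F) : Prop :=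
  ∀ B : Finset (GroundSet n), IsTransversal B → numStars B % 2 = σ →
    ∀ i j : Fin n, i ≠ j →
      φ ((B \ pr i) ∪ pr j)
        = ε ^ ((if (i, false) ∈ B then 1 else 0) + (if (j, false) ∈ B then 1 else 0))
            * φ ((B ∪ pr i) \ pr j)

variable [CommGroupWithZero F] {ε : F} {σ : ℕ} {φ : Finset (GroundSet n) → F}
  {i : Fin n} {A : Finset (GroundSet n)} {k : GroundSet n}

theorem Xvec_of_mem {S : Finset (GroundSet n)} (h : k ∈ S) :
    Xvec φ ε S k = ε ^ numBelow S k * φ (S.erase k) := if_pos h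

theorem Xvec_of_notMem {S : Finset (GroundSet n)} (h : k ∉ S) : Xvec φ ε S k = 0 := if_neg h

theorem Yvec_of_st_mem (h : st k ∈ A) : Yvec φ ε A k = 0 := if_pos h

theorem Yvec_of_st_notMem (h : st k ∉ A) :
    Yvec φ ε A k = ε ^ numBelow A (st k) * φ (insert (st k) A) := if_neg h

theorem IsTransversalOff.disjoint_pr (hA : IsTransversalOff i A) : Disjoint A (pr i) :=
  Finset.disjoint_left.2 fun a ha hpr => hA.fst_ne a ha (mem_pr.1 hpr)

theorem Yvec_eq_pow_mul_Xvec_of_fst_eq (hε : ε * ε = 1) (h3 : SatisfiesRGP3 σ φ)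
    (hA : IsTransversalOff i A) (hk : k.1 = i) :
    Yvec φ ε A k = ε ^ (numStars A + σ + 1) * Xvec φ ε (A ∪ pr i) k := by
  have hkA : k ∉ A := fun h => hA.fst_ne _ h hk
  have hstA : st k ∉ A := fun h => hA.fst_ne _ h hk
  have herase : (A ∪ pr i).erase k = insert (st k) A := by
    rw [← hk, pr_fst, skw]
    ext a
    by_cases h : a = k <;> simp [h, hkA, (st_ne_self k).symm]
  have hT : IsTransversal (insert (st k) A) := by
    have h := hA.isTransversal_insert (!k.2)
    rwa [← hk] at h
  rw [Yvec_of_st_notMem hstA, Xvec_of_mem (Finset.mem_union_right _ (mem_pr.2 hk)), herase]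
  by_cases hφ : φ (insert (st k) A) = 0
  · simp [hφ]
  have hpar : numStars (insert (st k) A) % 2 = σ % 2 := not_not.1 fun h => hφ (h3 _ hT h)
  rw [numStars_insert hstA] at hpar
  rw [← mul_assoc, ← pow_add]
  congr 1
  apply pow_eq_pow_of_mod_two_eq hε
  rw [numBelow_union hA.disjoint_pr, numBelow_st_of_forall_fst_ne (fun a ha => hk ▸ hA.fst_ne a ha),
    ← hk, numBelow_pr_fst]
  cases hb : k.2 <;> simp [hb] at hpar ⊢ <;> omega

theorem Yvec_eq_pow_mul_Xvec_of_mem (hε : ε * ε = 1) (h4 : SatisfiesRGP4 ε σ φ) (hσ : σ ≤ 1)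
    (hA : IsTransversalOff i A) (hk : k.1 ≠ i) (hkA : k ∈ A) :
    Yvec φ ε A k = ε ^ (numStars A + σ + 1) * Xvec φ ε (A ∪ pr i) k := by
  set m := numStars A + σ + 1
  have hstA : st k ∉ A := (hA.mem_iff k hk).1 hkA
  have hiA : ∀ b, ((i, b) : GroundSet n) ∉ A := fun b h => hA.fst_ne _ h rfl
  -- `B` is `A ∪ {i}` or `A ∪ {i*}`, whichever has parity `σ`.
  set B := insert (i, decide (m % 2 = 0)) A with hB
  have hBpar : numStars B % 2 = σ := by
    rw [numStars_insert (hiA _)]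
    by_cases hm : m % 2 = 0 <;> simp [hm] <;> omega
  have hl : (B \ pr i) ∪ pr k.1 = insert (st k) A := by
    rw [Finset.insert_sdiff_of_mem _ (mem_pr.2 rfl),
      Finset.sdiff_eq_self_of_disjoint hA.disjoint_pr, pr_fst, skw, Finset.union_insert,
      Finset.union_singleton, Finset.insert_eq_of_mem (Finset.mem_insert_of_mem hkA)]
  have hr : (B ∪ pr i) \ pr k.1 = (A ∪ pr i).erase k := by
    have hst : st k ∉ A ∪ pr i := by simp [hstA, mem_pr, hk]
    rw [Finset.insert_union, Finset.insert_eq_of_mem (Finset.mem_union_right _ (mem_pr.2 rfl)),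
      pr_fst k, skw, Finset.sdiff_insert, Finset.sdiff_singleton_eq_erase,
      Finset.erase_eq_of_notMem hst]
  have hif_i : (if ((i, false) : GroundSet n) ∈ B then 1 else 0) = if m % 2 = 0 then 0 else 1 := by
    by_cases hm : m % 2 = 0 <;> simp [hB, hm, hiA]
  have hif_k : (if ((k.1, false) : GroundSet n) ∈ B then 1 else 0) = if k.2 then 0 else 1 := by
    obtain ⟨k1, k2⟩ := k
    cases k2 <;> simp_all [st, Prod.ext_iff]
  have h := h4 B (hA.isTransversal_insert _) hBpar i k.1 (Ne.symm hk)
  rw [hl, hr] at h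
  rw [Yvec_of_st_notMem hstA, Xvec_of_mem (Finset.mem_union_left _ hkA), h, ← mul_assoc, ← pow_add,
    ← mul_assoc, ← pow_add]
  congr 1
  apply pow_eq_pow_of_mod_two_eq hε
  have hpr := Nat.even_iff.1 (even_numBelow_pr (Ne.symm hk))
  rw [numBelow_union hA.disjoint_pr, numBelow_st_of_mem hkA hstA, hif_i, hif_k]
  split_ifs <;> omega

theorem Yvec_eq_pow_mul_Xvec (hε : ε * ε = 1) (h3 : SatisfiesRGP3 σ φ) (h4 : SatisfiesRGP4 ε σ φ)
    (hσ : σ ≤ 1) (hA : IsTransversalOff i A) :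
    Yvec φ ε A = fun k => ε ^ (numStars A + σ + 1) * Xvec φ ε (A ∪ pr i) k := by
  funext k
  by_cases hk : k.1 = i
  · exact Yvec_eq_pow_mul_Xvec_of_fst_eq hε h3 hA hk
  by_cases hkA : k ∈ A
  · exact Yvec_eq_pow_mul_Xvec_of_mem hε h4 hσ hA hk hkA
  have hstA : st k ∈ A := not_not.1 ((hA.mem_iff k hk).not.1 hkA)
  have hkS : k ∉ A ∪ pr i := by simp [hkA, mem_pr, hk]
  rw [Yvec_of_st_mem hstA, Xvec_of_notMem hkS, mul_zero]

end GrassmannPluecker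

theorem Yvec_eq_Xvec_or_neg_general {n : ℕ} {F : Type*} [CommGroupWithZero F] (T : Tract F)
    (ε : F) (hε₀ : ε ≠ 0) (hε : ({1, ε} : Multiset F) ∈ T.N)
    (σ : ℕ) (hσ : σ ≤ 1)
    (φ : Finset (GroundSet n) → F)
    (hrGP3 : ∀ B : Finset (GroundSet n), IsTransversal B →
      (B.filter (fun p => p.2 = true)).card % 2 ≠ σ % 2 → φ B = 0)
    (hrGP4 : ∀ B : Finset (GroundSet n), IsTransversal B →
      (B.filter (fun p => p.2 = true)).card % 2 = σ →
      ∀ i j : Fin n, i ≠ j →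
        φ ((B \ pr i) ∪ pr j)
          = ε ^ ((if (i, false) ∈ B then 1 else 0) + (if (j, false) ∈ B then 1 else 0))
              * φ ((B ∪ pr i) \ pr j))
    (S : Finset (GroundSet n)) (hS : IsHyperTransversal S)
    (x : GroundSet n) (hx : skw x ⊆ S)
    (S' : Finset (GroundSet n)) (hS' : S' = S \ skw x) :
    Yvec φ ε S' = Xvec φ ε S ∨ Yvec φ ε S' = fun k => ε * Xvec φ ε S k := by
  have hε1 : ε * ε = 1 := T.mul_self_eq_one hε₀ hε
  obtain ⟨T₀, hT₀, rfl⟩ := hS.exists_isTransversal_eq_union_pr hx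
  rw [← pr_fst, Finset.union_sdiff_right] at hS'
  subst hS'
  rw [← Finset.sdiff_union_self_eq_union,
    Yvec_eq_pow_mul_Xvec hε1 hrGP3 hrGP4 hσ (hT₀.isTransversalOff_sdiff_pr x.1)]
  rcases pow_eq_one_or_eq_self hε1 (numStars (T₀ \ pr x.1) + σ + 1) with h | h
  · left
    simp only [h, one_mul]
  · right
    simp only [h]

/-- Let `φ` be a restricted Grassmann–Plücker function of type D over a tract `F`
(with parameter `σ` as in (rGP3)), `S` a hyper-transversal containing the skew
pair `{x, x*}`, and `S' = S \ {x, x*}`.  Then `Y_{S'} = X_S` or `Y_{S'} = -X_S`. -/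
theorem Yvec_eq_Xvec_or_neg {n : ℕ} {F : Type*} [CommGroupWithZero F] (T : Tract F)
    (ε : F) (hε₀ : ε ≠ 0) (hε : ({1, ε} : Multiset F) ∈ T.N)
    (σ : ℕ) (hσ : σ ≤ 1)
    (φ : Finset (GroundSet n) → F)
    (hrGP1 : ∃ Z : Finset (GroundSet n),
      (IsTransversal Z ∨ IsAlmostTransversal Z) ∧ φ Z ≠ 0)
    (hrGP2 : ∀ S S' : Finset (GroundSet n),
      IsHyperTransversal S → IsHypoTransversal S' →
      ((S \ S').val.map (fun k =>
          ε ^ (((symmDiff S S').filter (fun a => idx a < idx k)).card)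
            * (φ (S.erase k) * φ (insert k S')))) ∈ T.N)
    (hrGP3 : ∀ B : Finset (GroundSet n), IsTransversal B →
      (B.filter (fun p => p.2 = true)).card % 2 ≠ σ % 2 → φ B = 0)
    (hrGP4 : ∀ B : Finset (GroundSet n), IsTransversal B →
      (B.filter (fun p => p.2 = true)).card % 2 = σ →
      ∀ i j : Fin n, i ≠ j →
        φ ((B \ pr i) ∪ pr j)
          = ε ^ ((if (i, false) ∈ B then 1 else 0) + (if (j, false) ∈ B then 1 else 0))
              * φ ((B ∪ pr i) \ pr j))
    (S : Finset (GroundSet n)) (hS : IsHyperTransversal S)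
    (x : GroundSet n) (hx : skw x ⊆ S)
    (S' : Finset (GroundSet n)) (hS' : S' = S \ skw x) :
    Yvec φ ε S' = Xvec φ ε S ∨ Yvec φ ε S' = fun k => ε * Xvec φ ε S k :=
  Yvec_eq_Xvec_or_neg_general T ε hε₀ hε σ hσ φ hrGP3 hrGP4 S hS x hx S' hS'
end
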